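/- (Duality of the NTW basis with the NTW degrees of freedom.) Let K be a nondegenerate triangle with vertices a₁, a₂, a₃ ∈ ℝ². For all i, m ∈ {1,2,3}: φ_i(a_m) = δ_{im}, φ_i(b_m) = 0, ⨍_{e_m} n_m·∇φ_i = 0; χ_i(a_m) = 0, χ_i(b_m) = δ_{im}, ⨍_{e_m} n_m·∇χ_i = 0; and ψ_i(a_m) = 0, ψ_i(b_m) = 0, ⨍_{e_m} n_m·∇ψ_i = δ_{im}. -/

import Mathlib

/-!
Everything reduces to the values of the barycentric coordinates: `δ_{jm}` at the vertex `a_m`,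
`(0, 1/2, 1/2)` at the midpoint `b_m`, and `(0, 1 - t, t)` at the point of `e_m` with parameter
`t` (listed as `λ_m, λ_{m+1}, λ_{m+2}`). As `λ_m = 0` on `e_m`, the bubble `b_K` vanishes on the
boundary and its normal derivative on `e_m` is `-‖∇λ_m‖ t (1 - t)`, so it affects no point value
and enters the normal moments only through this profile. Each normal derivative is therefore a
cubic in `t`, which we expand in the basis `1, t, t (1 - t), t (1 - t) (2t - 1)` with averages
`1, 1/2, 1/6, 0` over `[0, 1]`. The only further input is `∑ ∇λ_j = 0`, a consequence of affine
independence, which makes `⨍_{e_m} n_m·∇χ_m` vanish.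
-/

open RealInnerProductSpace MeasureTheory

noncomputable section

/-- Barycentric coordinate `λ_i(x) = c_i + ⟪g_i, x⟫` (with constant gradient `g_i`). -/
def lam (g : Fin 3 → EuclideanSpace ℝ (Fin 2)) (c : Fin 3 → ℝ) (i : Fin 3)
    (x : EuclideanSpace ℝ (Fin 2)) : ℝ := c i + ⟪g i, x⟫

/-- Cubic bubble `b_K = λ₁ λ₂ λ₃`. -/
def bub (g : Fin 3 → EuclideanSpace ℝ (Fin 2)) (c : Fin 3 → ℝ)
    (x : EuclideanSpace ℝ (Fin 2)) : ℝ :=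
  lam g c 0 x * lam g c 1 x * lam g c 2 x

/-- NTW vertex basis function
`φ_i = λ_i(2λ_i − 1) − 6 b_K (2λ_i − 1) + 6 b_K Σ_{j≠i} ((∇λ_i·∇λ_j)/‖∇λ_j‖²)(2λ_j − 1)`. -/
def phi (g : Fin 3 → EuclideanSpace ℝ (Fin 2)) (c : Fin 3 → ℝ) (i : Fin 3)
    (x : EuclideanSpace ℝ (Fin 2)) : ℝ :=
  lam g c i x * (2 * lam g c i x - 1) - 6 * bub g c x * (2 * lam g c i x - 1)
    + 6 * bub g c x *
      ∑ j ∈ Finset.univ.erase i, (⟪g i, g j⟫ / ‖g j‖ ^ 2) * (2 * lam g c j x - 1)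

/-- NTW midpoint basis function `χ_i = 4 λ_j λ_k + 12 b_K (1 − 4λ_i)`. -/
def chi (g : Fin 3 → EuclideanSpace ℝ (Fin 2)) (c : Fin 3 → ℝ) (i : Fin 3)
    (x : EuclideanSpace ℝ (Fin 2)) : ℝ :=
  4 * lam g c (i + 1) x * lam g c (i + 2) x + 12 * bub g c x * (1 - 4 * lam g c i x)

/-- NTW normal-moment basis function `ψ_i = 6 b_K (2λ_i − 1)/‖∇λ_i‖`. -/
def psi (g : Fin 3 → EuclideanSpace ℝ (Fin 2)) (c : Fin 3 → ℝ) (i : Fin 3)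
    (x : EuclideanSpace ℝ (Fin 2)) : ℝ :=
  6 * bub g c x * (2 * lam g c i x - 1) / ‖g i‖

/-- Affine relative `φ̃_i = λ_i(2λ_i − 1) + 6 b_K (1 − λ_i)`. -/
def phiT (g : Fin 3 → EuclideanSpace ℝ (Fin 2)) (c : Fin 3 → ℝ) (i : Fin 3)
    (x : EuclideanSpace ℝ (Fin 2)) : ℝ :=
  lam g c i x * (2 * lam g c i x - 1) + 6 * bub g c x * (1 - lam g c i x)

/-- Affine relative `ψ̃_i = 6 b_K (2λ_i − 1)`. -/
def psiT (g : Fin 3 → EuclideanSpace ℝ (Fin 2)) (c : Fin 3 → ℝ) (i : Fin 3)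
    (x : EuclideanSpace ℝ (Fin 2)) : ℝ :=
  6 * bub g c x * (2 * lam g c i x - 1)

/-- Midpoint `b_i = (a_j + a_k)/2` of the edge `e_i` opposite the vertex `a_i`. -/
def emid (a : Fin 3 → EuclideanSpace ℝ (Fin 2)) (i : Fin 3) : EuclideanSpace ℝ (Fin 2) :=
  (1 / 2 : ℝ) • (a (i + 1) + a (i + 2))

/-- Edge average `⨍_{e_i} f = ∫₀¹ f(a_j + t(a_k − a_j)) dt`. -/
def edgeAvg (a : Fin 3 → EuclideanSpace ℝ (Fin 2)) (i : Fin 3)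
    (f : EuclideanSpace ℝ (Fin 2) → ℝ) : ℝ :=
  ∫ t in (0 : ℝ)..1, f (a (i + 1) + t • (a (i + 2) - a (i + 1)))

/-- Outward unit normal `n_i = −∇λ_i/‖∇λ_i‖` of the edge `e_i`. -/
def nvec (g : Fin 3 → EuclideanSpace ℝ (Fin 2)) (i : Fin 3) : EuclideanSpace ℝ (Fin 2) :=
  -(‖g i‖⁻¹ • g i)

lemma Fin.eq_or_eq_add_one_or_eq_add_two (i m : Fin 3) : i = m ∨ i = m + 1 ∨ i = m + 2 := by
  fin_cases i <;> fin_cases m <;> decide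

lemma Fin.sum_erase_eq_add_one_add_two {M : Type*} [AddCommMonoid M] (f : Fin 3 → M) (i : Fin 3) :
    ∑ j ∈ Finset.univ.erase i, f j = f (i + 1) + f (i + 2) := by
  have h : Finset.univ.erase i = {i + 1, i + 2} := by fin_cases i <;> decide
  rw [h, Finset.sum_pair (by fin_cases i <;> decide)]

lemma Fin.sum_univ_three_cyclic {M : Type*} [AddCommMonoid M] (f : Fin 3 → M) (m : Fin 3) :
    ∑ j, f j = f m + f (m + 1) + f (m + 2) := by
  fin_cases m <;> simp [Fin.sum_univ_three] <;> abel

lemma eq_zero_of_forall_inner_eq_of_affineIndependent {ι E : Type*} [Fintype ι]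
    [NormedAddCommGroup E] [InnerProductSpace ℝ E] [FiniteDimensional ℝ E] {p : ι → E}
    (hp : AffineIndependent ℝ p) (hcard : Fintype.card ι = Module.finrank ℝ E + 1) {v : E} {r : ℝ}
    (h : ∀ i, ⟪v, p i⟫ = r) : v = 0 := by
  have hker : vectorSpan ℝ (Set.range p) ≤ LinearMap.ker (innerₛₗ ℝ v) := by
    rw [vectorSpan_def, Submodule.span_le]
    rintro _ ⟨_, ⟨i, rfl⟩, _, ⟨j, rfl⟩, rfl⟩
    simp [inner_sub_right, h]
  rw [hp.vectorSpan_eq_top_of_card_eq_finrank_add_one hcard] at hker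
  exact inner_self_eq_zero.1 (hker Submodule.mem_top)

lemma integral_cubic_zero_one (A B C D : ℝ) :
    ∫ t in (0 : ℝ)..1, (A + B * t + C * (t * (1 - t)) + D * (t * (1 - t) * (2 * t - 1)))
      = A + B / 2 + C / 6 := by
  have hderiv : ∀ t : ℝ, HasDerivAt
      (fun u => A * u + B / 2 * u ^ 2 + C * (u ^ 2 / 2 - u ^ 3 / 3) - D / 2 * (u ^ 2 * (1 - u) ^ 2))
      (A + B * t + C * (t * (1 - t)) + D * (t * (1 - t) * (2 * t - 1))) t := by
    intro t
    have hC := ((hasDerivAt_pow 2 t).div_const 2).fun_sub ((hasDerivAt_pow 3 t).div_const 3)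
    have hD := (hasDerivAt_pow 2 t).fun_mul (((hasDerivAt_id' t).const_sub 1).fun_pow 2)
    refine ((((hasDerivAt_id' t).const_mul A).fun_add ((hasDerivAt_pow 2 t).const_mul (B / 2))).fun_add
      (hC.const_mul C)).fun_sub (hD.const_mul (D / 2)) |>.congr_deriv ?_
    push_cast
    ring
  rw [intervalIntegral.integral_eq_sub_of_hasDerivAt (fun t _ => hderiv t)
    (Continuous.intervalIntegrable (by fun_prop) 0 1)]
  ring

section Barycentric

variable {g : Fin 3 → EuclideanSpace ℝ (Fin 2)} {c : Fin 3 → ℝ}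

lemma lam_add_smul_sub (j : Fin 3) (x y : EuclideanSpace ℝ (Fin 2)) (t : ℝ) :
    lam g c j (x + t • (y - x)) = lam g c j x + t * (lam g c j y - lam g c j x) := by
  simp only [lam, inner_add_right, inner_smul_right, inner_sub_right]
  ring

lemma lam_midpoint (j : Fin 3) (x y : EuclideanSpace ℝ (Fin 2)) :
    lam g c j ((1 / 2 : ℝ) • (x + y)) = (lam g c j x + lam g c j y) / 2 := by
  simp only [lam, inner_add_right, inner_smul_right]
  ring

lemma bub_eq_cyclic (m : Fin 3) (y : EuclideanSpace ℝ (Fin 2)) :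
    bub g c y = lam g c m y * lam g c (m + 1) y * lam g c (m + 2) y := by
  fin_cases m <;> simp [bub] <;> ring

lemma bub_eq_zero_of_lam_eq_zero {m : Fin 3} {y : EuclideanSpace ℝ (Fin 2)}
    (h : lam g c m y = 0) : bub g c y = 0 := by
  rw [bub_eq_cyclic m, h, zero_mul, zero_mul]

lemma inner_nvec (j m : Fin 3) : ⟪g j, nvec g m⟫ = -(⟪g j, g m⟫ / ‖g m‖) := by
  rw [nvec, inner_neg_right, inner_smul_right, div_eq_inv_mul]

lemma inner_self_nvec (m : Fin 3) : ⟪g m, nvec g m⟫ = -‖g m‖ := by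
  rw [inner_nvec, real_inner_self_eq_norm_sq]
  rcases eq_or_ne ‖g m‖ 0 with h | h
  · simp [h]
  · field_simp

end Barycentric

section Derivatives

variable (g : Fin 3 → EuclideanSpace ℝ (Fin 2)) (c : Fin 3 → ℝ)

lemma hasFDerivAt_lam (j : Fin 3) (x : EuclideanSpace ℝ (Fin 2)) :
    HasFDerivAt (lam g c j) (innerSL ℝ (g j)) x :=
  (innerSL ℝ (g j)).hasFDerivAt.const_add (c j)

lemma hasFDerivAt_bub (m : Fin 3) (y : EuclideanSpace ℝ (Fin 2)) :
    HasFDerivAt (bub g c)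
      ((lam g c m y * lam g c (m + 1) y) • innerSL ℝ (g (m + 2))
        + lam g c (m + 2) y • (lam g c m y • innerSL ℝ (g (m + 1))
          + lam g c (m + 1) y • innerSL ℝ (g m))) y := by
  rw [show bub g c = fun y => lam g c m y * lam g c (m + 1) y * lam g c (m + 2) y from
    funext (bub_eq_cyclic m)]
  exact ((hasFDerivAt_lam g c m y).mul (hasFDerivAt_lam g c (m + 1) y)).mul
    (hasFDerivAt_lam g c (m + 2) y)

lemma fderiv_bub_apply (m : Fin 3) (y v : EuclideanSpace ℝ (Fin 2)) :
    fderiv ℝ (bub g c) y v = lam g c (m + 1) y * lam g c (m + 2) y * ⟪g m, v⟫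
      + lam g c m y * lam g c (m + 2) y * ⟪g (m + 1), v⟫
      + lam g c m y * lam g c (m + 1) y * ⟪g (m + 2), v⟫ := by
  rw [(hasFDerivAt_bub g c m y).fderiv]
  simp only [add_apply, smul_apply, innerSL_apply_apply, smul_eq_mul]
  ring

lemma differentiableAt_bub (y : EuclideanSpace ℝ (Fin 2)) : DifferentiableAt ℝ (bub g c) y :=
  (hasFDerivAt_bub g c 0 y).differentiableAt

lemma fderiv_psi_apply (i : Fin 3) (y v : EuclideanSpace ℝ (Fin 2)) :
    fderiv ℝ (psi g c i) y v =
      (12 * bub g c y * ⟪g i, v⟫ + 6 * (2 * lam g c i y - 1) * fderiv ℝ (bub g c) y v) / ‖g i‖ := by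
  have h : HasFDerivAt (psi g c i) _ y :=
    (((differentiableAt_bub g c y).hasFDerivAt.const_mul 6).fun_mul
      (((hasFDerivAt_lam g c i y).const_mul 2).sub_const 1)).mul_const ‖g i‖⁻¹
  rw [h.fderiv]
  simp only [add_apply, smul_apply, innerSL_apply_apply, smul_eq_mul]
  ring

lemma fderiv_chi_apply (i : Fin 3) (y v : EuclideanSpace ℝ (Fin 2)) :
    fderiv ℝ (chi g c i) y v =
      4 * lam g c (i + 1) y * ⟪g (i + 2), v⟫ + 4 * lam g c (i + 2) y * ⟪g (i + 1), v⟫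
        + 12 * (1 - 4 * lam g c i y) * fderiv ℝ (bub g c) y v - 48 * bub g c y * ⟪g i, v⟫ := by
  have h : HasFDerivAt (chi g c i) _ y :=
    (((hasFDerivAt_lam g c (i + 1) y).const_mul 4).fun_mul (hasFDerivAt_lam g c (i + 2) y)).fun_add
      (((differentiableAt_bub g c y).hasFDerivAt.const_mul 12).fun_mul
        (((hasFDerivAt_lam g c i y).const_mul 4).const_sub 1))
  rw [h.fderiv]
  simp only [add_apply, smul_apply, neg_apply, innerSL_apply_apply, smul_eq_mul]
  ring

lemma fderiv_phi_apply (i : Fin 3) (y v : EuclideanSpace ℝ (Fin 2)) :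
    fderiv ℝ (phi g c i) y v =
      (4 * lam g c i y - 1) * ⟪g i, v⟫ - 12 * bub g c y * ⟪g i, v⟫
        - 6 * (2 * lam g c i y - 1) * fderiv ℝ (bub g c) y v
        + 12 * bub g c y * (⟪g i, g (i + 1)⟫ / ‖g (i + 1)‖ ^ 2 * ⟪g (i + 1), v⟫
          + ⟪g i, g (i + 2)⟫ / ‖g (i + 2)‖ ^ 2 * ⟪g (i + 2), v⟫)
        + 6 * (⟪g i, g (i + 1)⟫ / ‖g (i + 1)‖ ^ 2 * (2 * lam g c (i + 1) y - 1)
          + ⟪g i, g (i + 2)⟫ / ‖g (i + 2)‖ ^ 2 * (2 * lam g c (i + 2) y - 1))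
          * fderiv ℝ (bub g c) y v := by
  have h2lam (j : Fin 3) :
      HasFDerivAt (fun x => 2 * lam g c j x - 1) ((2 : ℝ) • innerSL ℝ (g j)) y :=
    ((hasFDerivAt_lam g c j y).const_mul 2).sub_const 1
  have hbub := (differentiableAt_bub g c y).hasFDerivAt.const_mul 6
  have h := (((hasFDerivAt_lam g c i y).fun_mul (h2lam i)).fun_sub (hbub.fun_mul (h2lam i))).fun_add
    (hbub.fun_mul (((h2lam (i + 1)).const_mul (⟪g i, g (i + 1)⟫ / ‖g (i + 1)‖ ^ 2)).fun_add
      ((h2lam (i + 2)).const_mul (⟪g i, g (i + 2)⟫ / ‖g (i + 2)‖ ^ 2))))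
  unfold phi
  simp only [Fin.sum_erase_eq_add_one_add_two]
  rw [h.fderiv]
  simp only [add_apply, sub_apply, smul_apply, innerSL_apply_apply, smul_eq_mul]
  ring

end Derivatives

def edgePoint (a : Fin 3 → EuclideanSpace ℝ (Fin 2)) (m : Fin 3) (t : ℝ) :
    EuclideanSpace ℝ (Fin 2) :=
  a (m + 1) + t • (a (m + 2) - a (m + 1))

lemma edgeAvg_eq_of_forall_edgePoint {a : Fin 3 → EuclideanSpace ℝ (Fin 2)} {m : Fin 3}
    {f : EuclideanSpace ℝ (Fin 2) → ℝ} (A B C D : ℝ)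
    (h : ∀ t, f (edgePoint a m t)
      = A + B * t + C * (t * (1 - t)) + D * (t * (1 - t) * (2 * t - 1))) :
    edgeAvg a m f = A + B / 2 + C / 6 :=
  (intervalIntegral.integral_congr fun t _ => h t).trans (integral_cubic_zero_one A B C D)

section Triangle

variable {a g : Fin 3 → EuclideanSpace ℝ (Fin 2)} {c : Fin 3 → ℝ}

lemma gradient_ne_zero (hlam : ∀ j r : Fin 3, lam g c j (a r) = if j = r then 1 else 0)
    (j : Fin 3) : g j ≠ 0 := by
  intro h0
  have h : lam g c j (a j) = lam g c j (a (j + 1)) := by simp only [lam, h0, inner_zero_left]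
  simp [hlam] at h

lemma sum_gradient_eq_zero (hind : AffineIndependent ℝ a)
    (hlam : ∀ j r : Fin 3, lam g c j (a r) = if j = r then 1 else 0) : ∑ j, g j = 0 := by
  refine eq_zero_of_forall_inner_eq_of_affineIndependent hind (by simp) (r := 1 - ∑ j, c j)
    fun r => ?_
  have h (j : Fin 3) : ⟪g j, a r⟫ = (if j = r then 1 else 0) - c j := by
    rw [← hlam j r, lam, add_sub_cancel_left]
  simp [sum_inner, h, Finset.sum_sub_distrib]

lemma inner_add_one_nvec_add_inner_add_two_nvec (hind : AffineIndependent ℝ a)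
    (hlam : ∀ j r : Fin 3, lam g c j (a r) = if j = r then 1 else 0) (m : Fin 3) :
    ⟪g (m + 1), nvec g m⟫ + ⟪g (m + 2), nvec g m⟫ = ‖g m‖ := by
  have h := sum_gradient_eq_zero hind hlam
  rw [Fin.sum_univ_three_cyclic _ m] at h
  have h' := congrArg (⟪·, nvec g m⟫) h
  simp only [inner_add_left, inner_zero_left, inner_self_nvec] at h'
  linarith

lemma lam_edgePoint_self (hlam : ∀ j r : Fin 3, lam g c j (a r) = if j = r then 1 else 0)
    (m : Fin 3) (t : ℝ) : lam g c m (edgePoint a m t) = 0 := by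
  simp [edgePoint, lam_add_smul_sub, hlam]

lemma lam_edgePoint_add_one (hlam : ∀ j r : Fin 3, lam g c j (a r) = if j = r then 1 else 0)
    (m : Fin 3) (t : ℝ) : lam g c (m + 1) (edgePoint a m t) = 1 - t := by
  rw [edgePoint, lam_add_smul_sub, hlam, hlam]
  simp
  ring

lemma lam_edgePoint_add_two (hlam : ∀ j r : Fin 3, lam g c j (a r) = if j = r then 1 else 0)
    (m : Fin 3) (t : ℝ) : lam g c (m + 2) (edgePoint a m t) = t := by
  simp [edgePoint, lam_add_smul_sub, hlam]

lemma lam_emid_self (hlam : ∀ j r : Fin 3, lam g c j (a r) = if j = r then 1 else 0) (m : Fin 3) :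
    lam g c m (emid a m) = 0 := by
  rw [emid, lam_midpoint, hlam, hlam]
  simp

lemma lam_emid_add_one (hlam : ∀ j r : Fin 3, lam g c j (a r) = if j = r then 1 else 0)
    (m : Fin 3) :
    lam g c (m + 1) (emid a m) = 1 / 2 := by
  rw [emid, lam_midpoint, hlam, hlam]
  simp

lemma lam_emid_add_two (hlam : ∀ j r : Fin 3, lam g c j (a r) = if j = r then 1 else 0)
    (m : Fin 3) :
    lam g c (m + 2) (emid a m) = 1 / 2 := by
  rw [emid, lam_midpoint, hlam, hlam]
  simp

lemma bub_vertex (hlam : ∀ j r : Fin 3, lam g c j (a r) = if j = r then 1 else 0) (m : Fin 3) :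
    bub g c (a m) = 0 :=
  bub_eq_zero_of_lam_eq_zero (m := m + 1) (by simp [hlam])

lemma bub_emid (hlam : ∀ j r : Fin 3, lam g c j (a r) = if j = r then 1 else 0) (m : Fin 3) :
    bub g c (emid a m) = 0 :=
  bub_eq_zero_of_lam_eq_zero (lam_emid_self hlam m)

lemma bub_edgePoint (hlam : ∀ j r : Fin 3, lam g c j (a r) = if j = r then 1 else 0)
    (m : Fin 3) (t : ℝ) : bub g c (edgePoint a m t) = 0 :=
  bub_eq_zero_of_lam_eq_zero (lam_edgePoint_self hlam m t)

lemma fderiv_bub_edgePoint_nvec (hlam : ∀ j r : Fin 3, lam g c j (a r) = if j = r then 1 else 0)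
    (m : Fin 3) (t : ℝ) :
    fderiv ℝ (bub g c) (edgePoint a m t) (nvec g m) = -‖g m‖ * (t * (1 - t)) := by
  rw [fderiv_bub_apply g c m, lam_edgePoint_self hlam, lam_edgePoint_add_one hlam,
    lam_edgePoint_add_two hlam, inner_self_nvec]
  ring

lemma phi_vertex (hlam : ∀ j r : Fin 3, lam g c j (a r) = if j = r then 1 else 0) (i m : Fin 3) :
    phi g c i (a m) = if i = m then 1 else 0 := by
  split_ifs with h <;> simp [phi, bub_vertex hlam, hlam, h]
  norm_num

lemma phi_emid (hlam : ∀ j r : Fin 3, lam g c j (a r) = if j = r then 1 else 0) (i m : Fin 3) :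
    phi g c i (emid a m) = 0 := by
  rcases Fin.eq_or_eq_add_one_or_eq_add_two i m with rfl | rfl | rfl <;>
    simp [phi, bub_emid hlam, lam_emid_self hlam, lam_emid_add_one hlam, lam_emid_add_two hlam]

lemma chi_vertex (hlam : ∀ j r : Fin 3, lam g c j (a r) = if j = r then 1 else 0) (i m : Fin 3) :
    chi g c i (a m) = 0 := by
  rcases Fin.eq_or_eq_add_one_or_eq_add_two m i with rfl | rfl | rfl <;>
    simp [chi, bub_vertex hlam, hlam]

lemma chi_emid (hlam : ∀ j r : Fin 3, lam g c j (a r) = if j = r then 1 else 0) (i m : Fin 3) :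
    chi g c i (emid a m) = if i = m then 1 else 0 := by
  rcases Fin.eq_or_eq_add_one_or_eq_add_two i m with rfl | rfl | rfl <;>
    simp [chi, bub_emid hlam, lam_emid_self hlam, lam_emid_add_one hlam, lam_emid_add_two hlam,
      add_assoc]
  norm_num

lemma psi_vertex (hlam : ∀ j r : Fin 3, lam g c j (a r) = if j = r then 1 else 0) (i m : Fin 3) :
    psi g c i (a m) = 0 := by
  simp [psi, bub_vertex hlam]

lemma psi_emid (hlam : ∀ j r : Fin 3, lam g c j (a r) = if j = r then 1 else 0) (i m : Fin 3) :
    psi g c i (emid a m) = 0 := by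
  simp [psi, bub_emid hlam]

lemma edgeAvg_fderiv_psi_nvec (hlam : ∀ j r : Fin 3, lam g c j (a r) = if j = r then 1 else 0)
    (i m : Fin 3) :
    edgeAvg a m (fun y => fderiv ℝ (psi g c i) y (nvec g m)) = if i = m then 1 else 0 := by
  rcases Fin.eq_or_eq_add_one_or_eq_add_two i m with rfl | rfl | rfl
  · have hN : ‖g i‖ ≠ 0 := norm_ne_zero_iff.2 (gradient_ne_zero hlam i)
    refine (edgeAvg_eq_of_forall_edgePoint 0 0 6 0 fun t => ?_).trans (by norm_num)
    simp only [fderiv_psi_apply, bub_edgePoint hlam, fderiv_bub_edgePoint_nvec hlam,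
      lam_edgePoint_self hlam]
    field_simp
    ring
  · refine (edgeAvg_eq_of_forall_edgePoint 0 0 0 (6 * ‖g m‖ / ‖g (m + 1)‖) fun t => ?_).trans
      (by simp)
    simp only [fderiv_psi_apply, bub_edgePoint hlam, fderiv_bub_edgePoint_nvec hlam,
      lam_edgePoint_add_one hlam]
    ring
  · refine (edgeAvg_eq_of_forall_edgePoint 0 0 0 (-6 * ‖g m‖ / ‖g (m + 2)‖) fun t => ?_).trans
      (by simp)
    simp only [fderiv_psi_apply, bub_edgePoint hlam, fderiv_bub_edgePoint_nvec hlam,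
      lam_edgePoint_add_two hlam]
    ring

lemma edgeAvg_fderiv_chi_nvec (hind : AffineIndependent ℝ a)
    (hlam : ∀ j r : Fin 3, lam g c j (a r) = if j = r then 1 else 0) (i m : Fin 3) :
    edgeAvg a m (fun y => fderiv ℝ (chi g c i) y (nvec g m)) = 0 := by
  rcases Fin.eq_or_eq_add_one_or_eq_add_two i m with rfl | rfl | rfl
  · refine (edgeAvg_eq_of_forall_edgePoint (4 * ⟪g (i + 2), nvec g i⟫)
      (4 * (⟪g (i + 1), nvec g i⟫ - ⟪g (i + 2), nvec g i⟫)) (-12 * ‖g i‖) 0 fun t => ?_).trans ?_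
    · simp only [fderiv_chi_apply, bub_edgePoint hlam, fderiv_bub_edgePoint_nvec hlam,
        lam_edgePoint_self hlam, lam_edgePoint_add_one hlam, lam_edgePoint_add_two hlam]
      ring
    · linear_combination 2 * inner_add_one_nvec_add_inner_add_two_nvec hind hlam i
  · refine (edgeAvg_eq_of_forall_edgePoint 0 (-4 * ‖g m‖) (12 * ‖g m‖) (-24 * ‖g m‖)
      fun t => ?_).trans (by ring)
    simp only [fderiv_chi_apply, bub_edgePoint hlam, fderiv_bub_edgePoint_nvec hlam, add_assoc,
      Fin.reduceAdd, add_zero, lam_edgePoint_self hlam, lam_edgePoint_add_one hlam,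
      lam_edgePoint_add_two hlam, inner_self_nvec]
    ring
  · refine (edgeAvg_eq_of_forall_edgePoint (-4 * ‖g m‖) (4 * ‖g m‖) (12 * ‖g m‖) (24 * ‖g m‖)
      fun t => ?_).trans (by ring)
    simp only [fderiv_chi_apply, bub_edgePoint hlam, fderiv_bub_edgePoint_nvec hlam, add_assoc,
      Fin.reduceAdd, add_zero, lam_edgePoint_self hlam, lam_edgePoint_add_one hlam,
      lam_edgePoint_add_two hlam, inner_self_nvec]
    ring

lemma edgeAvg_fderiv_phi_nvec (hlam : ∀ j r : Fin 3, lam g c j (a r) = if j = r then 1 else 0)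
    (i m : Fin 3) :
    edgeAvg a m (fun y => fderiv ℝ (phi g c i) y (nvec g m)) = 0 := by
  have hN : ‖g m‖ ≠ 0 := norm_ne_zero_iff.2 (gradient_ne_zero hlam m)
  rcases Fin.eq_or_eq_add_one_or_eq_add_two i m with rfl | rfl | rfl
  · refine (edgeAvg_eq_of_forall_edgePoint ‖g i‖ 0 (-6 * ‖g i‖)
      (-6 * ‖g i‖ * (⟪g i, g (i + 2)⟫ / ‖g (i + 2)‖ ^ 2 - ⟪g i, g (i + 1)⟫ / ‖g (i + 1)‖ ^ 2))
      fun t => ?_).trans (by ring)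
    simp only [fderiv_phi_apply, bub_edgePoint hlam, fderiv_bub_edgePoint_nvec hlam,
      lam_edgePoint_self hlam, lam_edgePoint_add_one hlam, lam_edgePoint_add_two hlam,
      inner_self_nvec]
    ring
  · refine (edgeAvg_eq_of_forall_edgePoint (3 * ⟪g (m + 1), nvec g m⟫) (-4 * ⟪g (m + 1), nvec g m⟫)
      (6 * ‖g m‖ * (⟪g (m + 1), g m⟫ / ‖g m‖ ^ 2))
      (-6 * ‖g m‖ * (1 + ⟪g (m + 1), g (m + 2)⟫ / ‖g (m + 2)‖ ^ 2)) fun t => ?_).trans ?_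
    · simp only [fderiv_phi_apply, bub_edgePoint hlam, fderiv_bub_edgePoint_nvec hlam, add_assoc,
        Fin.reduceAdd, add_zero, lam_edgePoint_self hlam, lam_edgePoint_add_one hlam,
        lam_edgePoint_add_two hlam]
      ring
    · rw [inner_nvec]
      field_simp
      ring
  · refine (edgeAvg_eq_of_forall_edgePoint (-⟪g (m + 2), nvec g m⟫) (4 * ⟪g (m + 2), nvec g m⟫)
      (6 * ‖g m‖ * (⟪g (m + 2), g m⟫ / ‖g m‖ ^ 2))
      (6 * ‖g m‖ * (1 + ⟪g (m + 2), g (m + 1)⟫ / ‖g (m + 1)‖ ^ 2)) fun t => ?_).trans ?_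
    · simp only [fderiv_phi_apply, bub_edgePoint hlam, fderiv_bub_edgePoint_nvec hlam, add_assoc,
        Fin.reduceAdd, add_zero, lam_edgePoint_self hlam, lam_edgePoint_add_one hlam,
        lam_edgePoint_add_two hlam]
      ring
    · rw [inner_nvec]
      field_simp
      ring

end Triangle

/-- Duality of the NTW basis functions with the NTW degrees of freedom: for a
nondegenerate triangle with vertices `a₁, a₂, a₃` and all `i, m`,
`φ_i(a_m) = δ_{im}`, `φ_i(b_m) = 0`, `⨍_{e_m} n_m·∇φ_i = 0`;
`χ_i(a_m) = 0`, `χ_i(b_m) = δ_{im}`, `⨍_{e_m} n_m·∇χ_i = 0`;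
`ψ_i(a_m) = 0`, `ψ_i(b_m) = 0`, `⨍_{e_m} n_m·∇ψ_i = δ_{im}`. -/
theorem ntw_basis_duality
    (a g : Fin 3 → EuclideanSpace ℝ (Fin 2)) (c : Fin 3 → ℝ)
    (hind : AffineIndependent ℝ a)
    (hlam : ∀ i m : Fin 3, lam g c i (a m) = if i = m then 1 else 0) :
    ∀ i m : Fin 3,
      phi g c i (a m) = (if i = m then 1 else 0) ∧
      phi g c i (emid a m) = 0 ∧
      edgeAvg a m (fun y => fderiv ℝ (phi g c i) y (nvec g m)) = 0 ∧
      chi g c i (a m) = 0 ∧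
      chi g c i (emid a m) = (if i = m then 1 else 0) ∧
      edgeAvg a m (fun y => fderiv ℝ (chi g c i) y (nvec g m)) = 0 ∧
      psi g c i (a m) = 0 ∧
      psi g c i (emid a m) = 0 ∧
      edgeAvg a m (fun y => fderiv ℝ (psi g c i) y (nvec g m)) = (if i = m then 1 else 0) := by
  intro i m
  exact ⟨phi_vertex hlam i m, phi_emid hlam i m, edgeAvg_fderiv_phi_nvec hlam i m,
    chi_vertex hlam i m, chi_emid hlam i m, edgeAvg_fderiv_chi_nvec hind hlam i m,
    psi_vertex hlam i m, psi_emid hlam i m, edgeAvg_fderiv_psi_nvec hlam i m⟩
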